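/- arXiv:2409.00939 — 2 statements merged into one kernel-verified Lean document; each statement's English description precedes it below -/
import Mathlib

section
/- The function Q(x) = (1 − (w/(1+w))·(1/|x|)) Q* + (w/(3+w))·(1/|x|³) Q_b(x), with Q* = s(n⊗n − I/3) for a fixed unit vector n, and Q_b(x) = s(x̂⊗x̂ − I/3) where x̂ = x/|x|, is harmonic (each matrix entry is a harmonic function) on ℝ³ \ {0}. -/
noncomputable section

/-- The `i`-th partial derivative of a scalar field on `ℝ³`. -/
def pd (i : Fin 3) (f : EuclideanSpace ℝ (Fin 3) → ℝ) (x : EuclideanSpace ℝ (Fin 3)) : ℝ :=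
  fderiv ℝ f x (EuclideanSpace.single i 1)

/-- The Laplacian of a scalar field on `ℝ³`. -/
def lap (f : EuclideanSpace ℝ (Fin 3) → ℝ) (x : EuclideanSpace ℝ (Fin 3)) : ℝ :=
  ∑ i, pd i (pd i f) x

/-!
Off the origin every entry of `Q` is a constant, plus a multiple of `1/|x|`, plus a multiple
of the quadrupole potential `x_i x_j |x|⁻⁵ - δ_ij |x|⁻³/3 = ∂_i ∂_j (1/|x|) / 3`.
In `ℝ³` one has `Δ|x|^m = m(m+1)|x|^(m-2)`, so `1/|x|` is harmonic. The product rule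
`Δ(fg) = fΔg + 2∇f·∇g + gΔf` gives
`Δ(x_i x_j |x|^m) = m(m+5) x_i x_j |x|^(m-2) + 2δ_ij |x|^m`; for `m = -5` only `2δ_ij |x|⁻⁵`
survives, and it cancels `Δ(δ_ij |x|⁻³/3) = 2δ_ij |x|⁻⁵`.
-/

open Filter Topology

section NormDeriv

variable {F : Type*} [NormedAddCommGroup F] [InnerProductSpace ℝ F] {x : F}

theorem hasFDerivAt_norm (hx : x ≠ 0) :
    HasFDerivAt (fun y : F => ‖y‖) (‖x‖⁻¹ • innerSL ℝ x) x := by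
  have hr : ‖x‖ ≠ 0 := norm_ne_zero_iff.mpr hx
  have h := (Real.hasDerivAt_sqrt (pow_ne_zero 2 hr)).comp_hasFDerivAt x
    (hasStrictFDerivAt_norm_sq x).hasFDerivAt
  simp only [Function.comp_def, Real.sqrt_sq (norm_nonneg _)] at h
  refine h.congr_fderiv ?_
  ext y
  simp only [smul_apply, coe_innerSL_apply, nsmul_eq_mul, Nat.cast_ofNat, smul_eq_mul]
  field_simp

theorem hasFDerivAt_norm_zpow (m : ℤ) (hx : x ≠ 0) :
    HasFDerivAt (fun y : F => ‖y‖ ^ m) ((m * ‖x‖ ^ (m - 2)) • innerSL ℝ x) x := by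
  have hr : ‖x‖ ≠ 0 := norm_ne_zero_iff.mpr hx
  refine ((hasDerivAt_zpow m ‖x‖ (.inl hr)).comp_hasFDerivAt x
    (hasFDerivAt_norm hx)).congr_fderiv ?_
  rw [smul_smul, mul_assoc, ← zpow_neg_one, ← zpow_add₀ hr]
  ring_nf

end NormDeriv

section Laplacian

local notation "ℝ³" => EuclideanSpace ℝ (Fin 3)

variable {f g : ℝ³ → ℝ} {x : ℝ³}

theorem pd_congr_of_eventuallyEq (h : f =ᶠ[𝓝 x] g) (k : Fin 3) : pd k f x = pd k g x := by
  rw [pd, pd, h.fderiv_eq]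

theorem pd_eventuallyEq (h : f =ᶠ[𝓝 x] g) (k : Fin 3) : pd k f =ᶠ[𝓝 x] pd k g :=
  h.fderiv.mono fun _ hy => by rw [pd, pd, hy]

theorem lap_congr_of_eventuallyEq (h : f =ᶠ[𝓝 x] g) : lap f x = lap g x :=
  Finset.sum_congr rfl fun k _ => pd_congr_of_eventuallyEq (pd_eventuallyEq h k) k

theorem pd_const (c : ℝ) (k : Fin 3) : pd k (fun _ : ℝ³ => c) = fun _ => 0 := by
  ext
  simp [pd]

theorem pd_coord (i k : Fin 3) : pd k (fun y : ℝ³ => y i) = fun _ => if k = i then 1 else 0 := by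
  ext x
  rw [pd, show (fun y : ℝ³ => y i) = EuclideanSpace.proj i from rfl, ContinuousLinearMap.fderiv]
  simp [PiLp.single_apply, eq_comm]

theorem pd_add (hf : DifferentiableAt ℝ f x) (hg : DifferentiableAt ℝ g x) (k : Fin 3) :
    pd k (fun y => f y + g y) x = pd k f x + pd k g x := by
  simp [pd, fderiv_fun_add hf hg]

theorem pd_mul (hf : DifferentiableAt ℝ f x) (hg : DifferentiableAt ℝ g x) (k : Fin 3) :
    pd k (fun y => f y * g y) x = pd k f x * g x + f x * pd k g x := by
  simp only [pd, fderiv_fun_mul hf hg, add_apply, smul_apply, smul_eq_mul]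
  ring

theorem pd_norm_zpow (m : ℤ) (hx : x ≠ 0) (k : Fin 3) :
    pd k (fun y : ℝ³ => ‖y‖ ^ m) x = m * ‖x‖ ^ (m - 2) * x k := by
  simp [pd, (hasFDerivAt_norm_zpow m hx).fderiv, EuclideanSpace.inner_single_right, mul_assoc]

theorem ContDiffAt.pd {n : WithTop ℕ∞} (hf : ContDiffAt ℝ (n + 1) f x) (k : Fin 3) :
    ContDiffAt ℝ n (pd k f) x :=
  (hf.fderiv_right le_rfl).clm_apply contDiffAt_const

theorem ContDiffAt.eventually_differentiableAt (hf : ContDiffAt ℝ 2 f x) :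
    ∀ᶠ y in 𝓝 x, DifferentiableAt ℝ f y :=
  (hf.eventually (by simp)).mono fun _ hy => hy.differentiableAt two_ne_zero

theorem lap_add (hf : ContDiffAt ℝ 2 f x) (hg : ContDiffAt ℝ 2 g x) :
    lap (fun y => f y + g y) x = lap f x + lap g x := by
  rw [lap, lap, lap, ← Finset.sum_add_distrib]
  refine Finset.sum_congr rfl fun k _ => ?_
  have h : pd k (fun y => f y + g y) =ᶠ[𝓝 x] fun y => pd k f y + pd k g y :=
    (hf.eventually_differentiableAt.and hg.eventually_differentiableAt).mono
      fun _ hy => pd_add hy.1 hy.2 k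
  rw [pd_congr_of_eventuallyEq h, pd_add ((hf.pd k).differentiableAt one_ne_zero)
    ((hg.pd k).differentiableAt one_ne_zero)]

theorem lap_mul (hf : ContDiffAt ℝ 2 f x) (hg : ContDiffAt ℝ 2 g x) :
    lap (fun y => f y * g y) x
      = f x * lap g x + 2 * ∑ k, pd k f x * pd k g x + g x * lap f x := by
  simp only [lap, Finset.mul_sum, ← Finset.sum_add_distrib]
  refine Finset.sum_congr rfl fun k _ => ?_
  have h : pd k (fun y => f y * g y) =ᶠ[𝓝 x] fun y => pd k f y * g y + f y * pd k g y :=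
    (hf.eventually_differentiableAt.and hg.eventually_differentiableAt).mono
      fun _ hy => pd_mul hy.1 hy.2 k
  have hf' := (hf.pd k).differentiableAt one_ne_zero
  have hg' := (hg.pd k).differentiableAt one_ne_zero
  have hf1 := hf.differentiableAt two_ne_zero
  have hg1 := hg.differentiableAt two_ne_zero
  rw [pd_congr_of_eventuallyEq h,
    pd_add (f := fun y => pd k f y * g y) (g := fun y => f y * pd k g y) (hf'.mul hg1)
      (hf1.mul hg'),
    pd_mul hf' hg1, pd_mul hf1 hg']
  ring

theorem lap_const (c : ℝ) : lap (fun _ : ℝ³ => c) x = 0 := by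
  simp [lap, pd_const]

theorem lap_const_mul (c : ℝ) (hf : ContDiffAt ℝ 2 f x) :
    lap (fun y => c * f y) x = c * lap f x := by
  simp [lap_mul contDiffAt_const hf, lap_const, pd_const]

theorem lap_sub (hf : ContDiffAt ℝ 2 f x) (hg : ContDiffAt ℝ 2 g x) :
    lap (fun y => f y - g y) x = lap f x - lap g x := by
  have h : (fun y => f y - g y) = fun y => f y + -1 * g y := funext fun y => by ring
  rw [h, lap_add hf (contDiffAt_const.mul hg), lap_const_mul _ hg]
  ring

theorem contDiff_coord (i : Fin 3) : ContDiff ℝ 2 fun y : ℝ³ => y i :=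
  (EuclideanSpace.proj (𝕜 := ℝ) i).contDiff

theorem contDiffAt_norm_zpow (m : ℤ) (hx : x ≠ 0) :
    ContDiffAt ℝ 2 (fun y : ℝ³ => ‖y‖ ^ m) x :=
  (analyticAt_id.fun_zpow (norm_ne_zero_iff.mpr hx)).contDiffAt.comp x (contDiffAt_norm ℝ hx)

theorem lap_coord (i : Fin 3) : lap (fun y : ℝ³ => y i) x = 0 := by
  simp [lap, pd_coord, pd_const]

theorem lap_coord_mul_coord (i j : Fin 3) :
    lap (fun y : ℝ³ => y i * y j) x = if i = j then 2 else 0 := by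
  rw [lap_mul (contDiff_coord i).contDiffAt (contDiff_coord j).contDiffAt, lap_coord, lap_coord]
  simp only [mul_zero, pd_coord, mul_ite, mul_one, Finset.sum_ite_eq', Finset.mem_univ,
    ↓reduceIte, zero_add, add_zero]
  split_ifs <;> simp_all

theorem lap_norm_zpow (m : ℤ) (hx : x ≠ 0) :
    lap (fun y : ℝ³ => ‖y‖ ^ m) x = m * (m + 1) * ‖x‖ ^ (m - 2) := by
  have hr : ‖x‖ ≠ 0 := norm_ne_zero_iff.mpr hx
  have hgrad (k : Fin 3) :
      pd k (fun y : ℝ³ => ‖y‖ ^ m) =ᶠ[𝓝 x] fun y => m * ‖y‖ ^ (m - 2) * y k :=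
    (eventually_ne_nhds hx).mono fun y hy => pd_norm_zpow m hy k
  have hpd (k : Fin 3) : pd k (pd k fun y : ℝ³ => ‖y‖ ^ m) x
      = m * (m - 2) * ‖x‖ ^ (m - 4) * x k ^ 2 + m * ‖x‖ ^ (m - 2) := by
    rw [pd_congr_of_eventuallyEq (hgrad k),
      pd_mul (((contDiffAt_norm_zpow _ hx).differentiableAt two_ne_zero).const_mul _)
        ((contDiff_coord k).differentiable two_ne_zero x),
      pd_mul (differentiableAt_const _)
        ((contDiffAt_norm_zpow _ hx).differentiableAt two_ne_zero),
      pd_norm_zpow _ hx, pd_const, pd_coord]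
    simp only [↓reduceIte]
    push_cast
    ring_nf
  have hpow : ‖x‖ ^ (m - 2) = ‖x‖ ^ (m - 4) * ‖x‖ ^ 2 := by
    rw [← zpow_natCast, ← zpow_add₀ hr]
    ring_nf
  simp only [lap, hpd, Finset.sum_add_distrib, ← Finset.mul_sum,
    ← EuclideanSpace.real_norm_sq_eq, hpow,
    Finset.sum_const, Finset.card_univ, Fintype.card_fin, nsmul_eq_mul, Nat.cast_ofNat]
  ring

theorem lap_coord_mul_coord_mul_norm_zpow (i j : Fin 3) (m : ℤ) (hx : x ≠ 0) :
    lap (fun y : ℝ³ => y i * y j * ‖y‖ ^ m) x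
      = m * (m + 5) * (x i * x j) * ‖x‖ ^ (m - 2) + (if i = j then 2 else 0) * ‖x‖ ^ m := by
  have hi := (contDiff_coord i).contDiffAt (x := x)
  have hj := (contDiff_coord j).contDiffAt (x := x)
  have hpd (k : Fin 3) : pd k (fun y : ℝ³ => y i * y j) x
      = (if k = i then 1 else 0) * x j + x i * (if k = j then 1 else 0) := by
    rw [pd_mul (hi.differentiableAt two_ne_zero) (hj.differentiableAt two_ne_zero), pd_coord,
      pd_coord]
  rw [lap_mul (hi.mul hj) (contDiffAt_norm_zpow m hx), lap_norm_zpow m hx, lap_coord_mul_coord]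
  simp only [hpd, pd_norm_zpow m hx, ite_mul, one_mul, zero_mul, mul_ite, mul_one, mul_zero,
    add_mul, Finset.sum_add_distrib, Finset.sum_ite_eq', Finset.mem_univ, ↓reduceIte]
  split_ifs <;> ring

def quadrupolePotential (i j : Fin 3) (y : ℝ³) : ℝ :=
  y i * y j * ‖y‖ ^ (-5 : ℤ) - (if i = j then 1 / 3 else 0) * ‖y‖ ^ (-3 : ℤ)

theorem contDiffAt_quadrupolePotential (i j : Fin 3) (hx : x ≠ 0) :
    ContDiffAt ℝ 2 (quadrupolePotential i j) x :=
  (((contDiff_coord i).contDiffAt.mul (contDiff_coord j).contDiffAt).mul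
    (contDiffAt_norm_zpow _ hx)).sub (contDiffAt_const.mul (contDiffAt_norm_zpow _ hx))

theorem lap_quadrupolePotential (i j : Fin 3) (hx : x ≠ 0) :
    lap (quadrupolePotential i j) x = 0 := by
  have hi := (contDiff_coord i).contDiffAt (x := x)
  have hj := (contDiff_coord j).contDiffAt (x := x)
  unfold quadrupolePotential
  rw [lap_sub ((hi.mul hj).mul (contDiffAt_norm_zpow _ hx))
      (contDiffAt_const.mul (contDiffAt_norm_zpow _ hx)),
    lap_coord_mul_coord_mul_norm_zpow i j _ hx, lap_const_mul _ (contDiffAt_norm_zpow _ hx),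
    lap_norm_zpow _ hx]
  split_ifs <;> norm_num
  ring

end Laplacian

theorem Q_harmonic_general (w s : ℝ)
    (n : EuclideanSpace ℝ (Fin 3))
    (Q : EuclideanSpace ℝ (Fin 3) → Fin 3 → Fin 3 → ℝ)
    (hQ : ∀ x, ∀ i j, Q x i j =
      (1 - w / (1 + w) * (1 / ‖x‖)) * (s * (n i * n j - (if i = j then (1:ℝ)/3 else 0)))
      + w / (3 + w) * (1 / ‖x‖ ^ 3)
        * (s * ((x i / ‖x‖) * (x j / ‖x‖) - (if i = j then (1:ℝ)/3 else 0)))) :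
    ∀ x : EuclideanSpace ℝ (Fin 3), x ≠ 0 → ∀ i j, lap (fun y => Q y i j) x = 0 := by
  intro x hx i j
  set S := s * (n i * n j - (if i = j then (1:ℝ)/3 else 0))
  have hQ' : (fun y => Q y i j) =ᶠ[𝓝 x]
      fun y => S + (-(w / (1 + w)) * S * ‖y‖ ^ (-1 : ℤ)
        + w / (3 + w) * s * quadrupolePotential i j y) := by
    filter_upwards [eventually_ne_nhds hx] with y hy
    have hr : ‖y‖ ≠ 0 := norm_ne_zero_iff.mpr hy
    simp only [hQ, quadrupolePotential, zpow_neg, zpow_ofNat]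
    field_simp
    ring
  have h1 := contDiffAt_norm_zpow (-1) hx
  have h2 := contDiffAt_quadrupolePotential i j hx
  rw [lap_congr_of_eventuallyEq hQ', lap_add contDiffAt_const
      ((contDiffAt_const.mul h1).add (contDiffAt_const.mul h2)),
    lap_add (contDiffAt_const.mul h1) (contDiffAt_const.mul h2), lap_const_mul _ h1,
    lap_const_mul _ h2, lap_const, lap_norm_zpow _ hx, lap_quadrupolePotential i j hx]
  ring

/-- The tensor field
`Q(x) = (1 − (w/(1+w))(1/|x|)) Q* + (w/(3+w))(1/|x|³) Q_b(x)`,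
with `Q* = s(n⊗n − I/3)` for a fixed unit vector `n` and
`Q_b(x) = s(x̂⊗x̂ − I/3)`, is harmonic componentwise on `ℝ³ \ {0}`. -/
theorem Q_harmonic (w s : ℝ) (hw : 0 < w) (hs : 0 < s)
    (n : EuclideanSpace ℝ (Fin 3)) (hn : ‖n‖ = 1)
    (Q : EuclideanSpace ℝ (Fin 3) → Fin 3 → Fin 3 → ℝ)
    (hQ : ∀ x, ∀ i j, Q x i j =
      (1 - w / (1 + w) * (1 / ‖x‖)) * (s * (n i * n j - (if i = j then (1:ℝ)/3 else 0)))
      + w / (3 + w) * (1 / ‖x‖ ^ 3)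
        * (s * ((x i / ‖x‖) * (x j / ‖x‖) - (if i = j then (1:ℝ)/3 else 0)))) :
    ∀ x : EuclideanSpace ℝ (Fin 3), x ≠ 0 → ∀ i j, lap (fun y => Q y i j) x = 0 :=
  Q_harmonic_general w s n Q hQ
end
end

section
/- Suppose F : S² → ℝ³ is continuous with ∫_{S²} F dσ = 0, and define f(y) = F(ŷ)/|y|³ for |y| ≥ 1. Then the integral I(x) = ∫_{|y|≥1} |x−y|⁻¹ f(y) dy satisfies the bound |I(x)| ≤ C/|x| for all |x| ≥ 2, for some constant C depending only on sup|F|. -/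
/-!
Split `{1 ≤ ‖y‖}` at `‖y‖ = ‖x‖ / 2`. On the inner shell replace `‖x - y‖⁻¹` by `‖x‖⁻¹`: the
resulting integrand is a radial function times `F (‖y‖⁻¹ • y)`, so in polar coordinates its
integral factors through `∫ F dσ = 0`. The error `|‖x - y‖⁻¹ - ‖x‖⁻¹| ≤ 2 ‖y‖ / ‖x‖ ^ 2` leaves
`‖x‖⁻² ∫_{‖y‖ < ‖x‖} ‖y‖⁻² = O(‖x‖⁻¹)`. Outside, either `y` is within `‖x‖ / 4` of `x`, where
`‖y‖⁻³ ≤ 8 / ‖x‖ ^ 3` and `∫_{‖z‖ < ‖x‖/4} ‖z‖⁻¹ = O(‖x‖²)`, or `‖y‖ ≤ 5 ‖x - y‖`, where the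
integrand is `O(‖y‖⁻⁴)` and `∫_{‖y‖ > ‖x‖/2} ‖y‖⁻⁴ = O(‖x‖⁻¹)`.
-/

open MeasureTheory Metric

noncomputable section

/-- The surface measure on the unit sphere `S² ⊂ ℝ³`. -/
def sphereMeasure : Measure (sphere (0 : EuclideanSpace ℝ (Fin 3)) 1) :=
  (volume : Measure (EuclideanSpace ℝ (Fin 3))).toSphere

open Set Module

theorem indicator_norm_preimage {E G : Type*} [Norm E] [Zero G] (s : Set ℝ) (f : ℝ → G) :
    (norm ⁻¹' s).indicator (fun y : E => f ‖y‖) = fun y => s.indicator f ‖y‖ :=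
  funext fun _ => indicator_comp_right norm

section Radial

variable {E F : Type*} [NormedAddCommGroup E] [NormedSpace ℝ E] [FiniteDimensional ℝ E]
  [MeasurableSpace E] [BorelSpace E] (μ : Measure E) [μ.IsAddHaarMeasure] [NormedAddCommGroup F]

theorem integrableOn_norm_preimage_Icc_of_norm_le {f : E → F} (hf : AEStronglyMeasurable f μ)
    {a b C : ℝ} (hC : ∀ y, ‖y‖ ∈ Icc a b → ‖f y‖ ≤ C) : IntegrableOn f (norm ⁻¹' Icc a b) μ :=
  Measure.integrableOn_of_bounded ((isBounded_closedBall (x := 0) (r := b)).subset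
    fun _ hy => mem_closedBall_zero_iff.mpr hy.2).measure_lt_top.ne hf
    (ae_restrict_of_forall_mem (measurableSet_Icc.preimage measurable_norm) hC)

variable [NormedSpace ℝ F] [Nontrivial E]

theorem integral_fun_norm_smul_fun_inv_norm_smul_addHaar (f : ℝ → ℝ) (g : E → F) :
    ∫ y, f ‖y‖ • g (‖y‖⁻¹ • y) ∂μ =
      (∫ r, f r ∂Measure.volumeIoiPow (finrank ℝ E - 1)) • ∫ ω, g ω ∂μ.toSphere :=
  calc ∫ y, f ‖y‖ • g (‖y‖⁻¹ • y) ∂μ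
      = ∫ y : ({0}ᶜ : Set E), f ‖(y : E)‖ • g (‖(y : E)‖⁻¹ • y) ∂μ.comap (↑) := by
        rw [integral_subtype_comap (measurableSet_singleton 0).compl
          (fun y => f ‖y‖ • g (‖y‖⁻¹ • y)), restrict_compl_singleton]
    _ = ∫ p, f p.2 • g p.1 ∂μ.toSphere.prod (.volumeIoiPow (finrank ℝ E - 1)) := by
        simpa using μ.measurePreserving_homeomorphUnitSphereProd.integral_comp
          (Homeomorph.measurableEmbedding _) fun p => f p.2 • g p.1
    _ = _ := by
        rw [← integral_prod_swap]
        exact integral_prod_smul (fun r : Ioi (0 : ℝ) => f r)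
          (fun ω : sphere (0 : E) 1 => g ω)

theorem setIntegral_norm_preimage_fun_norm_smul_eq_zero {g : E → F}
    (hg : ∫ ω, g ω ∂μ.toSphere = 0) (f : ℝ → ℝ) {s : Set ℝ} (hs : MeasurableSet s) :
    ∫ y in norm ⁻¹' s, f ‖y‖ • g (‖y‖⁻¹ • y) ∂μ = 0 := by
  rw [← integral_indicator (hs.preimage measurable_norm)]
  simp_rw [indicator_smul_apply_left, indicator_norm_preimage]
  rw [integral_fun_norm_smul_fun_inv_norm_smul_addHaar, hg, smul_zero]

theorem setIntegral_norm_preimage_addHaar (f : ℝ → F) {s : Set ℝ} (hs : MeasurableSet s) :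
    ∫ y in norm ⁻¹' s, f ‖y‖ ∂μ =
      finrank ℝ E • μ.real (ball 0 1) • ∫ r in s ∩ Ioi 0, r ^ (finrank ℝ E - 1) • f r := by
  rw [← integral_indicator (hs.preimage measurable_norm), indicator_norm_preimage,
    integral_fun_norm_addHaar, ← Measure.restrict_restrict hs, ← integral_indicator hs]
  simp_rw [indicator_smul_apply]

theorem integrableOn_norm_preimage_iff_addHaar {f : ℝ → F} {s : Set ℝ} (hs : MeasurableSet s) :
    IntegrableOn (fun y => f ‖y‖) (norm ⁻¹' s) μ ↔
      IntegrableOn (fun r => r ^ (finrank ℝ E - 1) • f r) (s ∩ Ioi 0) := by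
  rw [← integrable_indicator_iff (hs.preimage measurable_norm), IntegrableOn,
    ← Measure.restrict_restrict hs, ← IntegrableOn, ← integrable_indicator_iff hs,
    indicator_norm_preimage, integrable_fun_norm_addHaar, indicator_smul]
  rfl

theorem pow_pred_mul_rpow {r : ℝ} (hr : 0 < r) {k : ℕ} (hk : k ≠ 0) (p : ℝ) :
    r ^ (k - 1) * r ^ p = r ^ ((k : ℝ) + p - 1) := by
  rw [← Real.rpow_natCast, ← Real.rpow_add hr, Nat.cast_pred (Nat.pos_of_ne_zero hk)]
  ring_nf

theorem integrableOn_ball_norm_rpow {p : ℝ} (hp : -(finrank ℝ E : ℝ) < p) (ρ : ℝ) :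
    IntegrableOn (fun y => ‖y‖ ^ p) (ball (0 : E) ρ) μ :=
  integrableOn_ball_of_norm_le_rpow finrank_pos (C := 1) (α := -p) (by linarith)
    (.of_forall fun y => by simp [abs_of_nonneg (Real.rpow_nonneg (norm_nonneg y) p)])
    (measurable_norm.pow_const p).aestronglyMeasurable

theorem integrable_indicator_ball_norm_rpow_sub {p : ℝ} (hp : -(finrank ℝ E : ℝ) < p) (x : E)
    (ρ : ℝ) : Integrable (fun y => (ball (0 : E) ρ).indicator (‖·‖ ^ p) (x - y)) μ :=
  ((integrableOn_ball_norm_rpow μ hp ρ).integrable_indicator measurableSet_ball).comp_sub_left x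

theorem setIntegral_ball_norm_rpow {p : ℝ} (hp : -(finrank ℝ E : ℝ) < p) {ρ : ℝ} (hρ : 0 ≤ ρ) :
    ∫ y in ball (0 : E) ρ, ‖y‖ ^ p ∂μ =
      finrank ℝ E * μ.real (ball 0 1) * (ρ ^ (finrank ℝ E + p) / (finrank ℝ E + p)) := by
  have hball : ball (0 : E) ρ = norm ⁻¹' Iio ρ := by ext; simp
  have hn : (finrank ℝ E : ℝ) + p ≠ 0 := by linarith
  rw [hball, setIntegral_norm_preimage_addHaar μ (fun r => r ^ p) measurableSet_Iio, Iio_inter_Ioi]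
  simp only [smul_eq_mul, nsmul_eq_mul]
  rw [setIntegral_congr_fun measurableSet_Ioo fun r hr => pow_pred_mul_rpow hr.1 finrank_pos.ne' p,
    ← integral_Ioc_eq_integral_Ioo, ← intervalIntegral.integral_of_le hρ,
    integral_rpow (Or.inl (by linarith)), sub_add_cancel, Real.zero_rpow hn, sub_zero, mul_assoc]

theorem integrableOn_compl_closedBall_norm_rpow {p : ℝ} (hp : p < -(finrank ℝ E : ℝ)) {ρ : ℝ}
    (hρ : 0 < ρ) : IntegrableOn (fun y => ‖y‖ ^ p) (closedBall (0 : E) ρ)ᶜ μ := by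
  have hcompl : (closedBall (0 : E) ρ)ᶜ = norm ⁻¹' Ioi ρ := by ext; simp
  rw [hcompl, integrableOn_norm_preimage_iff_addHaar μ (f := fun r => r ^ p) measurableSet_Ioi,
    Ioi_inter_Ioi, max_eq_left hρ.le]
  refine (integrableOn_Ioi_rpow_of_lt (a := finrank ℝ E + p - 1) (by linarith) hρ).congr_fun
    (fun r hr => ?_) measurableSet_Ioi
  exact (pow_pred_mul_rpow (hρ.trans hr) finrank_pos.ne' p).symm

theorem setIntegral_compl_closedBall_norm_rpow {p : ℝ} (hp : p < -(finrank ℝ E : ℝ)) {ρ : ℝ}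
    (hρ : 0 < ρ) :
    ∫ y in (closedBall (0 : E) ρ)ᶜ, ‖y‖ ^ p ∂μ =
      finrank ℝ E * μ.real (ball 0 1) * (ρ ^ (finrank ℝ E + p) / -(finrank ℝ E + p)) := by
  have hcompl : (closedBall (0 : E) ρ)ᶜ = norm ⁻¹' Ioi ρ := by ext; simp
  rw [hcompl, setIntegral_norm_preimage_addHaar μ (fun r => r ^ p) measurableSet_Ioi, Ioi_inter_Ioi,
    max_eq_left hρ.le]
  simp only [smul_eq_mul, nsmul_eq_mul]
  rw [setIntegral_congr_fun measurableSet_Ioi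
      fun r hr => pow_pred_mul_rpow (hρ.trans hr) finrank_pos.ne' p,
    integral_Ioi_rpow_of_lt (by linarith) hρ, sub_add_cancel, mul_assoc, div_neg, neg_div]

end Radial

namespace NewtonianDecay

section Kernel

variable {E F : Type*} [NormedAddCommGroup E] [NormedAddCommGroup F] [NormedSpace ℝ F]

theorem abs_inv_norm_sub_sub_inv_norm_le {x y : E} (hy : ‖y‖ ≤ ‖x‖ / 2) :
    |‖x - y‖⁻¹ - ‖x‖⁻¹| ≤ 2 * ‖y‖ / ‖x‖ ^ 2 := by
  rcases (norm_nonneg x).eq_or_lt with hx | hx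
  · have hy0 : y = 0 := norm_le_zero_iff.mp (by linarith)
    simp [hy0, ← hx]
  have hxy : ‖x‖ / 2 ≤ ‖x - y‖ := by linarith [norm_sub_norm_le x y]
  have hxy0 : 0 < ‖x - y‖ := by linarith
  have hdiff : |‖x‖ - ‖x - y‖| ≤ ‖y‖ := by simpa using abs_norm_sub_norm_le x (x - y)
  rw [inv_sub_inv hxy0.ne' hx.ne', abs_div, abs_of_pos (mul_pos hxy0 hx)]
  calc |‖x‖ - ‖x - y‖| / (‖x - y‖ * ‖x‖) ≤ ‖y‖ / (‖x‖ / 2 * ‖x‖) := by gcongr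
    _ = 2 * ‖y‖ / ‖x‖ ^ 2 := by field_simp

theorem abs_inv_norm_sub_mul_pow_three_sub_le {x y : E} (hy : ‖y‖ ≤ ‖x‖ / 2) :
    |(‖x - y‖ * ‖y‖ ^ 3)⁻¹ - (‖x‖ * ‖y‖ ^ 3)⁻¹| ≤ 2 / ‖x‖ ^ 2 * ‖y‖ ^ (-2 : ℝ) := by
  rw [mul_inv, mul_inv, ← sub_mul, abs_mul,
    abs_of_nonneg (inv_nonneg.mpr (by positivity) : 0 ≤ (‖y‖ ^ 3)⁻¹)]
  calc |‖x - y‖⁻¹ - ‖x‖⁻¹| * (‖y‖ ^ 3)⁻¹ ≤ 2 * ‖y‖ / ‖x‖ ^ 2 * (‖y‖ ^ 3)⁻¹ := by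
        gcongr
        exact abs_inv_norm_sub_sub_inv_norm_le hy
    _ = 2 / ‖x‖ ^ 2 * ‖y‖ ^ (-2 : ℝ) := by
        rw [show (-2 : ℝ) = 1 + -3 by norm_num, Real.rpow_add' (norm_nonneg y) (by norm_num),
          Real.rpow_one, Real.rpow_neg (norm_nonneg y)]
        norm_cast
        ring

def farMajorant (x y : E) : ℝ :=
  8 / ‖x‖ ^ 3 * (ball (0 : E) (‖x‖ / 4)).indicator (‖·‖ ^ (-1 : ℝ)) (x - y) + 5 * ‖y‖ ^ (-4 : ℝ)

theorem inv_norm_sub_mul_pow_three_le_farMajorant {x y : E} (hy : ‖x‖ / 2 < ‖y‖) :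
    (‖x - y‖ * ‖y‖ ^ 3)⁻¹ ≤ farMajorant x y := by
  have hy0 : 0 < ‖y‖ := lt_of_le_of_lt (by positivity) hy
  have hnear_nonneg : 0 ≤ 8 / ‖x‖ ^ 3 *
      (ball (0 : E) (‖x‖ / 4)).indicator (‖·‖ ^ (-1 : ℝ)) (x - y) :=
    mul_nonneg (by positivity) (indicator_nonneg (fun z _ => by positivity) _)
  rcases lt_or_ge ‖x - y‖ (‖x‖ / 4) with hnear | hfar
  · have hx : 0 < ‖x‖ := by linarith [norm_nonneg (x - y)]
    have hcube : (‖y‖ ^ 3)⁻¹ ≤ 8 / ‖x‖ ^ 3 := by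
      rw [show 8 / ‖x‖ ^ 3 = ((‖x‖ / 2) ^ 3)⁻¹ by field_simp; norm_num]
      gcongr
    rw [farMajorant, indicator_of_mem (by simpa using hnear), Real.rpow_neg_one, mul_inv]
    have : 0 ≤ 5 * ‖y‖ ^ (-4 : ℝ) := by positivity
    nlinarith [mul_le_mul_of_nonneg_left hcube (inv_nonneg.mpr (norm_nonneg (x - y)))]
  · have hfar' : ‖y‖ / 5 ≤ ‖x - y‖ := by
      linarith [show ‖y‖ ≤ ‖x‖ + ‖x - y‖ by simpa using norm_sub_le x (x - y)]
    calc (‖x - y‖ * ‖y‖ ^ 3)⁻¹ ≤ (‖y‖ / 5 * ‖y‖ ^ 3)⁻¹ := by gcongr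
      _ = 5 * ‖y‖ ^ (-4 : ℝ) := by
          rw [Real.rpow_neg (norm_nonneg y)]
          norm_cast
          field_simp
      _ ≤ farMajorant x y := le_add_of_nonneg_left hnear_nonneg

theorem norm_inv_norm_sub_mul_pow_three_smul_sub_le {x y : E} (hy : ‖y‖ ≤ ‖x‖ / 2) {v : F}
    {M : ℝ} (hv : ‖v‖ ≤ M) :
    ‖(‖x - y‖ * ‖y‖ ^ 3)⁻¹ • v - (‖x‖ * ‖y‖ ^ 3)⁻¹ • v‖ ≤ 2 * M / ‖x‖ ^ 2 * ‖y‖ ^ (-2 : ℝ) := by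
  rw [← sub_smul, norm_smul, Real.norm_eq_abs]
  calc |(‖x - y‖ * ‖y‖ ^ 3)⁻¹ - (‖x‖ * ‖y‖ ^ 3)⁻¹| * ‖v‖
      ≤ 2 / ‖x‖ ^ 2 * ‖y‖ ^ (-2 : ℝ) * M :=
        mul_le_mul (abs_inv_norm_sub_mul_pow_three_sub_le hy) hv (norm_nonneg v) (by positivity)
    _ = 2 * M / ‖x‖ ^ 2 * ‖y‖ ^ (-2 : ℝ) := by ring

theorem norm_inv_mul_pow_three_smul_le {a r : ℝ} (ha : 1 ≤ a) (hr : 1 ≤ r) {v : F} {M : ℝ}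
    (hv : ‖v‖ ≤ M) : ‖(a * r ^ 3)⁻¹ • v‖ ≤ M := by
  have hk : (a * r ^ 3)⁻¹ ≤ 1 := inv_le_one_of_one_le₀ (one_le_mul_of_one_le_of_one_le ha
    (one_le_pow₀ hr))
  rw [norm_smul, Real.norm_of_nonneg (by positivity)]
  exact (mul_le_of_le_one_left (norm_nonneg v) hk).trans hv

theorem norm_inv_norm_sub_mul_pow_three_smul_le_farMajorant {x y : E} (hy : ‖x‖ / 2 < ‖y‖)
    {v : F} {M : ℝ} (hv : ‖v‖ ≤ M) :
    ‖(‖x - y‖ * ‖y‖ ^ 3)⁻¹ • v‖ ≤ M * farMajorant x y := by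
  rw [norm_smul, Real.norm_of_nonneg (by positivity), mul_comm]
  exact mul_le_mul hv (inv_norm_sub_mul_pow_three_le_farMajorant hy) (by positivity)
    ((norm_nonneg v).trans hv)

end Kernel

variable {E F : Type*} [NormedAddCommGroup E] [NormedSpace ℝ E] [FiniteDimensional ℝ E]
  [MeasurableSpace E] [BorelSpace E] (μ : Measure E) [μ.IsAddHaarMeasure]
  [NormedAddCommGroup F] [NormedSpace ℝ F]

theorem integrableOn_farMajorant (hE : finrank ℝ E = 3) {x : E} (hx : x ≠ 0) :
    IntegrableOn (farMajorant x) (closedBall 0 (‖x‖ / 2))ᶜ μ := by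
  have : Nontrivial E := Module.nontrivial_of_finrank_pos (R := ℝ) (by omega)
  exact ((integrable_indicator_ball_norm_rpow_sub μ (by rw [hE]; norm_num) x _).const_mul _
    ).integrableOn.add ((integrableOn_compl_closedBall_norm_rpow μ (by rw [hE]; norm_num)
      (by positivity)).const_mul 5)

theorem setIntegral_farMajorant_le (hE : finrank ℝ E = 3) {x : E} (hx : x ≠ 0) :
    ∫ y in (closedBall 0 (‖x‖ / 2))ᶜ, farMajorant x y ∂μ ≤ 31 * μ.real (ball 0 1) / ‖x‖ := by
  have : Nontrivial E := Module.nontrivial_of_finrank_pos (R := ℝ) (by omega)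
  have hR : 0 < ‖x‖ := norm_pos_iff.mpr hx
  have hnear := integrable_indicator_ball_norm_rpow_sub μ (p := -1) (by rw [hE]; norm_num) x
    (‖x‖ / 4)
  have hfar := integrableOn_compl_closedBall_norm_rpow μ (p := -4) (by rw [hE]; norm_num)
    (half_pos hR)
  have hnear_le : ∫ y in (closedBall 0 (‖x‖ / 2))ᶜ,
      (ball (0 : E) (‖x‖ / 4)).indicator (‖·‖ ^ (-1 : ℝ)) (x - y) ∂μ ≤
        3 * μ.real (ball (0 : E) 1) * ‖x‖ ^ 2 / 32 := by
    refine (setIntegral_le_integral hnear (.of_forall fun y =>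
      indicator_nonneg (fun z _ => by positivity) _)).trans_eq ?_
    rw [integral_sub_left_eq_self (fun z => (ball (0 : E) (‖x‖ / 4)).indicator (‖·‖ ^ (-1 : ℝ)) z),
      integral_indicator measurableSet_ball, setIntegral_ball_norm_rpow μ (by rw [hE]; norm_num)
      (by positivity), hE]
    norm_num
    ring
  have hfar_eq : ∫ y in (closedBall 0 (‖x‖ / 2))ᶜ, ‖y‖ ^ (-4 : ℝ) ∂μ =
      6 * μ.real (ball (0 : E) 1) / ‖x‖ := by
    rw [setIntegral_compl_closedBall_norm_rpow μ (by rw [hE]; norm_num) (half_pos hR), hE]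
    norm_num [Real.rpow_neg_one]
    field_simp
    ring
  unfold farMajorant
  rw [integral_add (hnear.const_mul _).integrableOn (hfar.const_mul 5), integral_const_mul,
    integral_const_mul, hfar_eq]
  set V := μ.real (ball (0 : E) 1)
  have hV : 0 ≤ V := measureReal_nonneg
  calc _ ≤ 8 / ‖x‖ ^ 3 * (3 * V * ‖x‖ ^ 2 / 32) + 5 * (6 * V / ‖x‖) := by gcongr
    _ = 123 / 4 * V / ‖x‖ := by field_simp; ring
    _ ≤ 31 * V / ‖x‖ := by gcongr; norm_num

theorem integrableOn_compl_closedBall (hE : finrank ℝ E = 3) {x : E} (hx : x ≠ 0) {g : E → F}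
    (hg : AEStronglyMeasurable g μ) {M : ℝ} (hM : ∀ y, ‖g y‖ ≤ M) :
    IntegrableOn (fun y => (‖x - y‖ * ‖y‖ ^ 3)⁻¹ • g y) (closedBall 0 (‖x‖ / 2))ᶜ μ :=
  ((integrableOn_farMajorant μ hE hx).const_mul M).mono'
    (((by fun_prop : Measurable fun y : E => (‖x - y‖ * ‖y‖ ^ 3)⁻¹).aestronglyMeasurable.smul
      hg).restrict)
    (ae_restrict_of_forall_mem measurableSet_closedBall.compl fun y hy =>
      norm_inv_norm_sub_mul_pow_three_smul_le_farMajorant (by simpa using hy) (hM y))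

theorem norm_setIntegral_compl_closedBall_le (hE : finrank ℝ E = 3) {x : E} (hx : x ≠ 0)
    {g : E → F} {M : ℝ} (hM : ∀ y, ‖g y‖ ≤ M) :
    ‖∫ y in (closedBall 0 (‖x‖ / 2))ᶜ, (‖x - y‖ * ‖y‖ ^ 3)⁻¹ • g y ∂μ‖ ≤
      31 * M * μ.real (ball 0 1) / ‖x‖ :=
  calc ‖∫ y in (closedBall 0 (‖x‖ / 2))ᶜ, (‖x - y‖ * ‖y‖ ^ 3)⁻¹ • g y ∂μ‖
      ≤ ∫ y in (closedBall 0 (‖x‖ / 2))ᶜ, M * farMajorant x y ∂μ :=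
        norm_integral_le_of_norm_le ((integrableOn_farMajorant μ hE hx).const_mul M)
          (ae_restrict_of_forall_mem measurableSet_closedBall.compl fun y hy =>
            norm_inv_norm_sub_mul_pow_three_smul_le_farMajorant (by simpa using hy) (hM y))
    _ = M * ∫ y in (closedBall 0 (‖x‖ / 2))ᶜ, farMajorant x y ∂μ := integral_const_mul _ _
    _ ≤ M * (31 * μ.real (ball 0 1) / ‖x‖) :=
        mul_le_mul_of_nonneg_left (setIntegral_farMajorant_le μ hE hx)
          ((norm_nonneg _).trans (hM 0))
    _ = 31 * M * μ.real (ball 0 1) / ‖x‖ := by ring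

theorem integrableOn_shell (x : E) {g : E → F} (hg : AEStronglyMeasurable g μ) {M : ℝ}
    (hM : ∀ y, ‖g y‖ ≤ M) :
    IntegrableOn (fun y => (‖x - y‖ * ‖y‖ ^ 3)⁻¹ • g y) (norm ⁻¹' Icc 1 (‖x‖ / 2)) μ :=
  integrableOn_norm_preimage_Icc_of_norm_le μ
    ((by fun_prop : Measurable fun y : E => (‖x - y‖ * ‖y‖ ^ 3)⁻¹).aestronglyMeasurable.smul hg)
    fun y hy => norm_inv_mul_pow_three_smul_le
      (by linarith [norm_sub_norm_le x y, hy.1, hy.2]) hy.1 (hM y)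

theorem norm_setIntegral_shell_le (hE : finrank ℝ E = 3) (x : E) {g : E → F}
    (hg : ∫ ω, g ω ∂μ.toSphere = 0)
    (hgm : AEStronglyMeasurable (fun y => g (‖y‖⁻¹ • y)) μ) {M : ℝ}
    (hM : ∀ y, ‖g (‖y‖⁻¹ • y)‖ ≤ M) :
    ‖∫ y in norm ⁻¹' Icc 1 (‖x‖ / 2), (‖x - y‖ * ‖y‖ ^ 3)⁻¹ • g (‖y‖⁻¹ • y) ∂μ‖ ≤
      6 * M * μ.real (ball 0 1) / ‖x‖ := by
  have : Nontrivial E := Module.nontrivial_of_finrank_pos (R := ℝ) (by omega)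
  have hA : MeasurableSet (norm ⁻¹' Icc (1 : ℝ) (‖x‖ / 2) : Set E) :=
    measurableSet_Icc.preimage measurable_norm
  have hradial_int : IntegrableOn (fun y => (‖x‖ * ‖y‖ ^ 3)⁻¹ • g (‖y‖⁻¹ • y))
      (norm ⁻¹' Icc 1 (‖x‖ / 2)) μ :=
    integrableOn_norm_preimage_Icc_of_norm_le μ
      ((by fun_prop : Measurable fun y : E => (‖x‖ * ‖y‖ ^ 3)⁻¹).aestronglyMeasurable.smul hgm)
      fun y hy => norm_inv_mul_pow_three_smul_le (by linarith [hy.1, hy.2]) hy.1 (hM y)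
  have hradial : ∫ y in norm ⁻¹' Icc 1 (‖x‖ / 2), (‖x‖ * ‖y‖ ^ 3)⁻¹ • g (‖y‖⁻¹ • y) ∂μ = 0 :=
    setIntegral_norm_preimage_fun_norm_smul_eq_zero μ hg (fun r => (‖x‖ * r ^ 3)⁻¹)
      measurableSet_Icc
  have hmajorant : IntegrableOn (fun y => 2 * M / ‖x‖ ^ 2 * ‖y‖ ^ (-2 : ℝ)) (ball 0 ‖x‖) μ :=
    (integrableOn_ball_norm_rpow μ (by rw [hE]; norm_num) _).const_mul _
  have hsub : norm ⁻¹' Icc 1 (‖x‖ / 2) ⊆ ball (0 : E) ‖x‖ := fun y hy =>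
    mem_ball_zero_iff.mpr (by linarith [hy.1, hy.2])
  have hM0 : 0 ≤ M := (norm_nonneg _).trans (hM 0)
  rw [← sub_zero (∫ y in _, _ ∂μ), ← hradial, ← integral_sub (integrableOn_shell μ x hgm hM)
    hradial_int]
  calc _ ≤ ∫ y in norm ⁻¹' Icc 1 (‖x‖ / 2), 2 * M / ‖x‖ ^ 2 * ‖y‖ ^ (-2 : ℝ) ∂μ :=
        norm_integral_le_of_norm_le (hmajorant.mono_set hsub) (ae_restrict_of_forall_mem hA
          fun y hy => norm_inv_norm_sub_mul_pow_three_smul_sub_le hy.2 (hM y))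
    _ ≤ ∫ y in ball 0 ‖x‖, 2 * M / ‖x‖ ^ 2 * ‖y‖ ^ (-2 : ℝ) ∂μ :=
        setIntegral_mono_set hmajorant (ae_restrict_of_forall_mem measurableSet_ball fun y _ =>
          by positivity) (.of_forall hsub)
    _ = 6 * M * μ.real (ball 0 1) / ‖x‖ := by
        rw [integral_const_mul, setIntegral_ball_norm_rpow μ (by rw [hE]; norm_num)
          (norm_nonneg x), hE]
        norm_num
        rcases (norm_nonneg x).eq_or_lt with hx | hx
        · simp [← hx]
        · field_simp
          ring

theorem norm_setIntegral_one_le_norm_le (hE : finrank ℝ E = 3) {x : E} (hx : 2 ≤ ‖x‖) {g : E → F}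
    (hg : ∫ ω, g ω ∂μ.toSphere = 0)
    (hgm : AEStronglyMeasurable (fun y => g (‖y‖⁻¹ • y)) μ) {M : ℝ}
    (hM : ∀ y, ‖g (‖y‖⁻¹ • y)‖ ≤ M) :
    ‖∫ y in {y : E | 1 ≤ ‖y‖}, (‖x - y‖ * ‖y‖ ^ 3)⁻¹ • g (‖y‖⁻¹ • y) ∂μ‖ ≤
      37 * M * μ.real (ball 0 1) / ‖x‖ := by
  have hx0 : x ≠ 0 := norm_pos_iff.mp (by linarith)
  have hsplit : {y : E | 1 ≤ ‖y‖} = norm ⁻¹' Icc 1 (‖x‖ / 2) ∪ (closedBall 0 (‖x‖ / 2))ᶜ := by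
    ext y
    simp only [mem_ofPred_eq, mem_union, mem_preimage, mem_Icc, mem_compl_iff,
      mem_closedBall_zero_iff]
    grind
  have hdisj : Disjoint (norm ⁻¹' Icc 1 (‖x‖ / 2)) (closedBall (0 : E) (‖x‖ / 2))ᶜ :=
    disjoint_compl_right_iff_subset.mpr fun y hy => mem_closedBall_zero_iff.mpr hy.2
  rw [hsplit, setIntegral_union hdisj measurableSet_closedBall.compl
    (integrableOn_shell μ x hgm hM) (integrableOn_compl_closedBall μ hE hx0 hgm hM)]
  calc _ ≤ _ := norm_add_le _ _
    _ ≤ 6 * M * μ.real (ball 0 1) / ‖x‖ + 31 * M * μ.real (ball 0 1) / ‖x‖ :=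
        add_le_add (norm_setIntegral_shell_le μ hE x hg hgm hM)
          (norm_setIntegral_compl_closedBall_le μ hE hx0 hM)
    _ = 37 * M * μ.real (ball 0 1) / ‖x‖ := by ring

end NewtonianDecay

open NewtonianDecay

/-- If `F` is continuous with mean zero on the unit sphere and `f(y) = F(ŷ)/|y|³`
for `|y| ≥ 1`, then `I(x) = ∫_{|y|≥1} |x−y|⁻¹ f(y) dy` satisfies `|I(x)| ≤ C/|x|`
for all `|x| ≥ 2`, for some constant `C`. -/
theorem newtonian_potential_decay_of_mean_zero
    (F : EuclideanSpace ℝ (Fin 3) → EuclideanSpace ℝ (Fin 3)) (hF : Continuous F)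
    (hmean : ∫ ω : sphere (0 : EuclideanSpace ℝ (Fin 3)) 1,
        F (ω : EuclideanSpace ℝ (Fin 3)) ∂sphereMeasure = 0) :
    ∃ C : ℝ, ∀ x : EuclideanSpace ℝ (Fin 3), 2 ≤ ‖x‖ →
      ‖∫ y in {y : EuclideanSpace ℝ (Fin 3) | 1 ≤ ‖y‖},
          (‖x - y‖ * ‖y‖ ^ 3)⁻¹ • F (‖y‖⁻¹ • y)‖ ≤ C / ‖x‖ := by
  obtain ⟨M, hM⟩ := (isCompact_closedBall 0 1).exists_bound_of_continuousOn hF.continuousOn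
  have hdir_le : ∀ y : EuclideanSpace ℝ (Fin 3), ‖F (‖y‖⁻¹ • y)‖ ≤ M := fun y => hM _ <| by
    rw [mem_closedBall_zero_iff, norm_smul, norm_inv, norm_norm]
    exact inv_mul_le_one_of_le₀ le_rfl (norm_nonneg y)
  have hdir : AEStronglyMeasurable (fun y : EuclideanSpace ℝ (Fin 3) => F (‖y‖⁻¹ • y)) volume :=
    (hF.measurable.comp (by fun_prop)).aestronglyMeasurable
  exact ⟨_, fun x hx => norm_setIntegral_one_le_norm_le volume finrank_euclideanSpace_fin hx hmean
    hdir hdir_le⟩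
end
end
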